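/- arXiv:0904.0315 — 2 statements merged into one kernel-verified Lean document; each statement's English description precedes it below -/
import Mathlib

section
/- Assume α > 0 and −2α < m < 0. Let f : ℝ → ℝ solve the power-law ODE on [0,∞) with f(t) > 0 for all t ≥ 0, f(t) → ∞, f'(t) → 0 and f''(t) → 0 as t → ∞. Then f(t)·f''(t) → 0 as t → ∞, and the derivative of g(t) = |f''(t)|^{n−1}·f''(t) converges to 0 as t → ∞. -/
open Real Set Filter Topology

/-- The signed power nonlinearity `x ↦ |x|^(n-1) * x`. -/
noncomputable def powLaw (n x : ℝ) : ℝ := |x| ^ (n - 1) * x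

/-- `f` solves the power-law ODE `(|f''|^(n-1) f'')' + α f f'' - m (f')² = 0` on `I`:
`f` is twice continuously differentiable on `I`, `t ↦ |f''(t)|^(n-1) f''(t)` is
differentiable on `I`, and the equation holds on `I`. -/
def SolvesPowerLawODE (n α m : ℝ) (f : ℝ → ℝ) (I : Set ℝ) : Prop :=
  (∀ t ∈ I, DifferentiableAt ℝ f t) ∧
  (∀ t ∈ I, DifferentiableAt ℝ (deriv f) t) ∧
  ContinuousOn (deriv (deriv f)) I ∧
  (∀ t ∈ I, DifferentiableAt ℝ (fun s => powLaw n (deriv (deriv f) s)) t) ∧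
  (∀ t ∈ I, deriv (fun s => powLaw n (deriv (deriv f) s)) t
      + α * f t * deriv (deriv f) t - m * (deriv f t) ^ 2 = 0)

/-!
Put `H = f f''`. Since `powLaw n (f f'') = f ^ n · powLaw n f''`, the equation gives
`(powLaw n H)' = f ^ n (B - α H)` with `B = n (f'/f) powLaw n f'' + m f'² → 0`. Once `|B|` is
small and `f ≥ 1`, the quantity `powLaw n H` decreases at a definite rate whenever `H ≥ e`, and
increases at a definite rate whenever `H ≤ -e`, so it is eventually trapped in
`[-powLaw n e, powLaw n e]`. Hence `H → 0`, and then the equation gives `(powLaw n f'')' → 0`.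
-/

lemma powLaw_neg (n x : ℝ) : powLaw n (-x) = -powLaw n x := by
  simp [powLaw]

lemma abs_powLaw {n : ℝ} (hn : n ≠ 0) (x : ℝ) : |powLaw n x| = |x| ^ n := by
  rcases eq_or_ne x 0 with rfl | hx
  · simp [powLaw, Real.zero_rpow hn]
  · rw [powLaw, abs_mul, abs_of_nonneg (by positivity), ← Real.rpow_add_one (abs_ne_zero.mpr hx)]
    ring_nf

lemma powLaw_of_nonneg {n x : ℝ} (hn : n ≠ 0) (hx : 0 ≤ x) : powLaw n x = x ^ n := by
  have hnonneg : 0 ≤ powLaw n x := mul_nonneg (by positivity) hx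
  simpa only [abs_of_nonneg hx, abs_of_nonneg hnonneg] using abs_powLaw hn x

lemma powLaw_strictMono {n : ℝ} (hn : 0 < n) : StrictMono (powLaw n) := by
  refine strictMono_of_odd_strictMonoOn_nonneg (powLaw_neg n) fun x hx y hy hxy => ?_
  rw [powLaw_of_nonneg hn.ne' hx, powLaw_of_nonneg hn.ne' hy]
  exact Real.rpow_lt_rpow hx hxy hn

lemma powLaw_mul {n a : ℝ} (ha : 0 < a) (x : ℝ) : powLaw n (a * x) = a ^ n * powLaw n x := by
  rw [powLaw, powLaw, abs_mul, abs_of_pos ha, Real.mul_rpow ha.le (abs_nonneg x),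
    Real.rpow_sub_one ha.ne']
  field_simp

lemma tendsto_powLaw_nhds_zero {n : ℝ} (hn : 0 < n) : Tendsto (powLaw n) (𝓝 0) (𝓝 0) := by
  refine squeeze_zero_norm (fun x => (abs_powLaw hn.ne' x).le) ?_
  simpa [Real.zero_rpow hn.ne'] using
    (continuous_abs.tendsto (0 : ℝ)).rpow_const (Or.inr hn.le)

lemma eventually_le_of_hasDerivAt_le_neg {G G' : ℝ → ℝ} {T E c : ℝ} (hc : 0 < c)
    (hG : ∀ t ≥ T, HasDerivAt G (G' t) t) (hG' : ∀ t ≥ T, E ≤ G t → G' t ≤ -c) :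
    ∀ᶠ t in atTop, G t ≤ E := by
  have hcont : ∀ a ≥ T, ∀ b, ContinuousOn G (Icc a b) := fun a ha b x hx =>
    (hG x (ha.trans hx.1)).continuousAt.continuousWithinAt
  have hderiv : ∀ a ≥ T, ∀ b, ∀ x ∈ Ico a b, HasDerivWithinAt G (G' x) (Ici x) x :=
    fun a ha b x hx => (hG x (ha.trans hx.1)).hasDerivWithinAt
  obtain ⟨s, hTs, hs⟩ : ∃ s ≥ T, G s ≤ E := by
    by_contra! hgt
    -- otherwise `G` would decrease at rate `c` forever
    set t := T + (G T - E) / c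
    have hTt : T ≤ t :=
      le_add_of_nonneg_right (div_nonneg (sub_nonneg.mpr (hgt T le_rfl).le) hc.le)
    have hline := image_le_of_deriv_right_le_deriv_boundary (hcont T le_rfl t)
      (hderiv T le_rfl t) (B := fun x => G T - c * (x - T)) (B' := fun _ => -c) (by simp)
      (by fun_prop)
      (fun x _ => (((hasDerivAt_id x).sub_const T).const_mul c).const_sub (G T)
        |>.hasDerivWithinAt.congr_deriv (by ring))
      (fun x hx => hG' x hx.1 (hgt x hx.1).le) ⟨hTt, le_rfl⟩
    have : G T - c * (t - T) = E := by simp only [t]; field_simp; ring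
    linarith [hgt t hTt]
  filter_upwards [eventually_ge_atTop s] with t hst
  exact image_le_of_deriv_right_lt_deriv_boundary (hcont s hTs t) (hderiv s hTs t) hs
    (fun _ => hasDerivAt_const _ E)
    (fun x hx hx' => (hG' x (hTs.trans hx.1) hx'.ge).trans_lt (neg_lt_zero.mpr hc))
    ⟨hst, le_rfl⟩

section Trapping

variable {φ H B w : ℝ → ℝ} {α : ℝ}

lemma eventually_le_of_hasDerivAt_strictMono_comp (hφ : StrictMono φ) (hα : 0 < α) {e : ℝ}
    (he : 0 < e) (hB : Tendsto B atTop (𝓝 0)) (hw : ∀ᶠ t in atTop, 1 ≤ w t)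
    (hG : ∀ᶠ t in atTop, HasDerivAt (fun s => φ (H s)) (w t * (B t - α * H t)) t) :
    ∀ᶠ t in atTop, H t ≤ e := by
  have hc : 0 < α * e / 2 := by positivity
  obtain ⟨T, hT⟩ := eventually_atTop.1 ((hB.eventually (eventually_le_nhds hc)).and (hw.and hG))
  have hφG := eventually_le_of_hasDerivAt_le_neg hc (fun t ht => (hT t ht).2.2) fun t ht hφt => by
    obtain ⟨hBt, hwt, -⟩ := hT t ht
    have hHt : e ≤ H t := hφ.le_iff_le.1 hφt
    have hdrift : B t - α * H t ≤ -(α * e / 2) := by nlinarith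
    nlinarith
  filter_upwards [hφG] with t ht using hφ.le_iff_le.1 ht

lemma tendsto_nhds_zero_of_hasDerivAt_strictMono_comp (hφ : StrictMono φ) (hα : 0 < α)
    (hB : Tendsto B atTop (𝓝 0)) (hw : ∀ᶠ t in atTop, 1 ≤ w t)
    (hG : ∀ᶠ t in atTop, HasDerivAt (fun s => φ (H s)) (w t * (B t - α * H t)) t) :
    Tendsto H atTop (𝓝 0) := by
  refine tendsto_order.2 ⟨fun a ha => ?_, fun a ha => ?_⟩
  · -- the lower bound is the upper bound for `-H`, driven by `x ↦ -φ (-x)` and `-B`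
    have hφ' : StrictMono fun x => -φ (-x) := fun x y hxy => neg_lt_neg (hφ (neg_lt_neg hxy))
    have hG' : ∀ᶠ t in atTop,
        HasDerivAt (fun s => -φ (-(-H s))) (w t * (-B t - α * -H t)) t := by
      filter_upwards [hG] with t ht
      simp only [neg_neg]
      exact ht.neg.congr_deriv (by ring)
    filter_upwards [eventually_le_of_hasDerivAt_strictMono_comp hφ' hα (half_pos (neg_pos.2 ha))
      (by simpa using hB.neg) hw hG'] with t ht
    linarith
  · filter_upwards [eventually_le_of_hasDerivAt_strictMono_comp hφ hα (half_pos ha) hB hw hG]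
      with t ht
    linarith

end Trapping

lemma SolvesPowerLawODE.hasDerivAt_powLaw_mul {n α m : ℝ} {f : ℝ → ℝ} {I : Set ℝ}
    (hf : SolvesPowerLawODE n α m f I) {t : ℝ} (ht : t ∈ I) (hft : 0 < f t) :
    HasDerivAt (fun s => powLaw n (f s * deriv (deriv f) s))
      (f t ^ n * (n * (deriv f t / f t) * powLaw n (deriv (deriv f) t) + m * deriv f t ^ 2
        - α * (f t * deriv (deriv f) t))) t := by
  obtain ⟨hf₁, -, -, hg, hode⟩ := hf
  have hfn : HasDerivAt (fun s => f s ^ n) (deriv f t * n * f t ^ (n - 1)) t :=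
    (hf₁ t ht).hasDerivAt.rpow_const (Or.inl hft.ne')
  have heq : (fun s => powLaw n (f s * deriv (deriv f) s)) =ᶠ[𝓝 t]
      fun s => f s ^ n * powLaw n (deriv (deriv f) s) := by
    filter_upwards [(hf₁ t ht).continuousAt.eventually (eventually_gt_nhds hft)] with s hs
      using powLaw_mul hs _
  refine ((hfn.mul (hg t ht).hasDerivAt).congr_of_eventuallyEq heq).congr_deriv ?_
  rw [Real.rpow_sub_one hft.ne']
  linear_combination f t ^ n * hode t ht

theorem stmt_13_general (n α m : ℝ) (hn : 1 < n) (hα : 0 < α)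
    (f : ℝ → ℝ)
    (hf : SolvesPowerLawODE n α m f (Set.Ici 0))
    (hpos : ∀ t : ℝ, 0 ≤ t → 0 < f t)
    (hinf : Filter.Tendsto f Filter.atTop Filter.atTop)
    (hd0 : Filter.Tendsto (deriv f) Filter.atTop (nhds 0))
    (hd0' : Filter.Tendsto (deriv (deriv f)) Filter.atTop (nhds 0)) :
    Filter.Tendsto (fun t => f t * deriv (deriv f) t) Filter.atTop (nhds 0) ∧
    Filter.Tendsto (deriv (fun s => powLaw n (deriv (deriv f) s)))
      Filter.atTop (nhds 0) := by
  have hn₀ : 0 < n := by linarith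
  have hg : Tendsto (fun t => powLaw n (deriv (deriv f) t)) atTop (𝓝 0) :=
    (tendsto_powLaw_nhds_zero hn₀).comp hd0'
  have hB : Tendsto (fun t => n * (deriv f t / f t) * powLaw n (deriv (deriv f) t)
      + m * deriv f t ^ 2) atTop (𝓝 0) := by
    simpa [div_eq_mul_inv] using ((tendsto_const_nhds.mul (hd0.mul hinf.inv_tendsto_atTop)).mul
      hg).add (tendsto_const_nhds.mul (hd0.pow 2))
  have hH : Tendsto (fun t => f t * deriv (deriv f) t) atTop (𝓝 0) :=
    tendsto_nhds_zero_of_hasDerivAt_strictMono_comp (powLaw_strictMono hn₀) hα hB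
      (by filter_upwards [hinf.eventually_ge_atTop 1] with t ht using one_le_rpow ht hn₀.le)
      (by filter_upwards [eventually_ge_atTop 0] with t ht
            using hf.hasDerivAt_powLaw_mul ht (hpos t ht))
  refine ⟨hH, ?_⟩
  have hrhs : Tendsto (fun t => m * deriv f t ^ 2 - α * (f t * deriv (deriv f) t))
      atTop (𝓝 0) := by
    simpa using (tendsto_const_nhds.mul (hd0.pow 2)).sub (tendsto_const_nhds.mul hH)
  refine hrhs.congr' ?_
  filter_upwards [eventually_ge_atTop 0] with t ht
  linarith [hf.2.2.2.2 t ht]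

theorem stmt_13 (n α m : ℝ) (hn : 1 < n) (hα : 0 < α) (hm₁ : -2 * α < m) (hm₂ : m < 0)
    (f : ℝ → ℝ)
    (hf : SolvesPowerLawODE n α m f (Set.Ici 0))
    (hpos : ∀ t : ℝ, 0 ≤ t → 0 < f t)
    (hinf : Filter.Tendsto f Filter.atTop Filter.atTop)
    (hd0 : Filter.Tendsto (deriv f) Filter.atTop (nhds 0))
    (hd0' : Filter.Tendsto (deriv (deriv f)) Filter.atTop (nhds 0)) :
    Filter.Tendsto (fun t => f t * deriv (deriv f) t) Filter.atTop (nhds 0) ∧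
    Filter.Tendsto (deriv (fun s => powLaw n (deriv (deriv f) s)))
      Filter.atTop (nhds 0) :=
  stmt_13_general n α m hn hα f hf hpos hinf hd0 hd0'
end

section
/- Assume α > 0 and −2α < m < 0. Let f : ℝ → ℝ solve the power-law ODE on [0,∞) with f(t) > 0 for all t ≥ 0, f(t) → ∞, f'(t) → 0 and f''(t) → 0 as t → ∞. Then the product f(t)·f'(t) has a limit in [0,∞] as t → ∞, and this limit equals ∞ if m + α > 0, is a finite strictly positive number if m + α = 0, and equals 0 if m + α < 0. -/
/-!
Along a solution, `E = |f''|^(n-1) f'' + α f f'` satisfies `E' = (m + α) f'²`, and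
`f f' = (E - |f''|^(n-1) f'') / α` where the correction tends to zero, so everything is read off
the behaviour of `E`. Two facts about `E` do the work. First, `E` cannot stay `≤ 0` on a half-line:
then `f'' ≤ 0` wherever `f' ≥ 0`, so `f' > 0` throughout (as `f → ∞`), and `(-f'')^n ≥ α f f'`
forces `f'` to vanish in finite time. Second, if `E ≥ ε > 0` on a half-line, then eventually
`f f' ≥ δ > 0`, so `f'² = (f f') (log f)' ≥ δ (log f)'` and `E / (m + α) → ∞`. Hence `E → ∞` if
`m + α > 0`, `E` is a positive constant if `m + α = 0`, and `E` decreases to `0` if `m + α < 0`.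
-/

open Real Set Filter Topology

lemma monotoneOn_Ici_of_hasDerivAt_nonneg {u u' : ℝ → ℝ} {T : ℝ}
    (hu : ∀ t ∈ Ici T, HasDerivAt u (u' t) t) (hu' : ∀ t ∈ Ici T, 0 ≤ u' t) :
    MonotoneOn u (Ici T) :=
  monotoneOn_of_hasDerivWithinAt_nonneg (convex_Ici T)
    (fun t ht => (hu t ht).continuousAt.continuousWithinAt)
    (fun t ht => (hu t (interior_subset ht)).hasDerivWithinAt)
    (fun t ht => hu' t (interior_subset ht))

lemma antitoneOn_Ici_of_hasDerivAt_nonpos {u u' : ℝ → ℝ} {T : ℝ}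
    (hu : ∀ t ∈ Ici T, HasDerivAt u (u' t) t) (hu' : ∀ t ∈ Ici T, u' t ≤ 0) :
    AntitoneOn u (Ici T) :=
  antitoneOn_of_hasDerivWithinAt_nonpos (convex_Ici T)
    (fun t ht => (hu t ht).continuousAt.continuousWithinAt)
    (fun t ht => (hu t (interior_subset ht)).hasDerivWithinAt)
    (fun t ht => hu' t (interior_subset ht))

lemma AntitoneOn.not_tendsto_atTop {u : ℝ → ℝ} {T : ℝ} (hu : AntitoneOn u (Ici T)) :
    ¬ Tendsto u atTop atTop := fun h => by
  obtain ⟨t, hgt, hT⟩ := ((h.eventually_gt_atTop (u T)).and (eventually_ge_atTop T)).exists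
  exact (hu self_mem_Ici hT hT).not_gt hgt

lemma nonpos_of_hasDerivAt_nonpos_of_nonneg {u u' : ℝ → ℝ} {a : ℝ}
    (hu : ∀ x ∈ Ici a, HasDerivAt u (u' x) x) (hu' : ∀ x ∈ Ici a, 0 ≤ u x → u' x ≤ 0)
    (ha : u a ≤ 0) : ∀ x ∈ Ici a, u x ≤ 0 := by
  intro b hb
  refine le_of_forall_pos_le_add fun ε hε => ?_
  set s := ε / (b - a + 1)
  have hlen : 0 < b - a + 1 := by linarith [mem_Ici.1 hb]
  have hs : 0 < s := div_pos hε hlen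
  have hline := image_le_of_deriv_right_lt_deriv_boundary (f := u) (f' := u')
    (B := fun x => s * (x - a)) (B' := fun _ => s)
    (fun x hx => (hu x hx.1).continuousAt.continuousWithinAt)
    (fun x hx => (hu x hx.1).hasDerivWithinAt) (by simpa using ha)
    (fun x => by simpa using ((hasDerivAt_id x).sub_const a).const_mul s)
    (fun x hx hux => (hu' x hx.1 (hux ▸ mul_nonneg hs.le (sub_nonneg.2 hx.1))).trans_lt hs)
    ⟨hb, le_rfl⟩
  calc u b ≤ s * (b - a) := hline
    _ ≤ s * (b - a + 1) := by nlinarith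
    _ = 0 + ε := by rw [zero_add, div_mul_cancel₀ ε hlen.ne']

/-- Along `v' ≤ -(κ v)^(1/n)` the quantity `v ^ (1 - 1/n)` decreases at a rate bounded away from
zero, so `v` reaches zero in finite time. -/
theorem exists_nonpos_of_mul_le_rpow_neg_deriv {n κ T : ℝ} {v v' : ℝ → ℝ} (hn : 1 < n)
    (hκ : 0 < κ) (hv : ∀ t ∈ Ici T, HasDerivAt v (v' t) t) (hv' : ∀ t ∈ Ici T, v' t ≤ 0)
    (hdecay : ∀ t ∈ Ici T, κ * v t ≤ (-v' t) ^ n) : ∃ t ∈ Ici T, v t ≤ 0 := by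
  by_contra! hpos
  set θ := 1 - n⁻¹
  have hθ : 0 < θ := sub_pos.2 (inv_lt_one_of_one_lt₀ hn)
  set c := θ * κ ^ n⁻¹
  have hc : 0 < c := by positivity
  have hslope : ∀ t ∈ Ici T, v' t * θ * v t ^ (θ - 1) ≤ -c := by
    intro t ht
    have hvt := hpos t ht
    have hroot : κ ^ n⁻¹ * v t ^ n⁻¹ ≤ -v' t := by
      rw [← Real.mul_rpow hκ.le hvt.le,
        ← Real.rpow_rpow_inv (neg_nonneg.2 (hv' t ht)) (by linarith : n ≠ 0)]
      exact Real.rpow_le_rpow (by positivity) (hdecay t ht) (by positivity)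
    have hcancel : v t ^ n⁻¹ * v t ^ (θ - 1) = 1 := by
      rw [← Real.rpow_add hvt]; simp [θ]
    have hw : 0 ≤ v t ^ (θ - 1) := Real.rpow_nonneg hvt.le _
    have := mul_le_mul_of_nonneg_right hroot hw
    rw [mul_assoc, hcancel, mul_one] at this
    nlinarith [mul_le_mul_of_nonneg_left this hθ.le]
  have hanti : AntitoneOn (fun t => v t ^ θ + c * t) (Ici T) :=
    antitoneOn_Ici_of_hasDerivAt_nonpos
      (fun t ht => ((hv t ht).rpow_const (Or.inl (hpos t ht).ne')).add
        ((hasDerivAt_id t).const_mul c))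
      (fun t ht => by linarith [hslope t ht])
  set t₁ := T + v T ^ θ / c
  have ht₁ : t₁ ∈ Ici T := show T ≤ t₁ from le_add_of_nonneg_right
    (div_nonneg (Real.rpow_nonneg (hpos T self_mem_Ici).le _) hc.le)
  have hct₁ : c * t₁ = c * T + v T ^ θ := by simp only [t₁]; field_simp
  have hdecr : v t₁ ^ θ + c * t₁ ≤ v T ^ θ + c * T := hanti self_mem_Ici ht₁ ht₁
  linarith [Real.rpow_pos_of_pos (hpos t₁ ht₁) θ]

theorem tendsto_atTop_of_hasDerivAt_deriv_sq {f P : ℝ → ℝ} {δ T : ℝ} (hδ : 0 < δ)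
    (hf : ∀ t ∈ Ici T, DifferentiableAt ℝ f t) (hP : ∀ t ∈ Ici T, HasDerivAt P (deriv f t ^ 2) t)
    (hpos : ∀ t ∈ Ici T, 0 < f t) (hδf : ∀ t ∈ Ici T, δ ≤ f t * deriv f t)
    (hinf : Tendsto f atTop atTop) : Tendsto P atTop atTop := by
  have hmono : MonotoneOn (fun t => P t - δ * log (f t)) (Ici T) := by
    refine monotoneOn_Ici_of_hasDerivAt_nonneg
      (fun t ht => (hP t ht).sub (((hf t ht).hasDerivAt.log (hpos t ht).ne').const_mul δ))
      fun t ht => ?_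
    have hft := hpos t ht
    have hlogd : 0 ≤ deriv f t / f t := by
      have : 0 < f t * deriv f t := hδ.trans_le (hδf t ht)
      exact div_nonneg (pos_of_mul_pos_right this hft.le).le hft.le
    have hsq : deriv f t ^ 2 = f t * deriv f t * (deriv f t / f t) := by field_simp
    nlinarith [mul_le_mul_of_nonneg_right (hδf t ht) hlogd]
  have hlog : Tendsto (fun t => δ * log (f t) + (P T - δ * log (f T))) atTop atTop :=
    tendsto_atTop_add_const_right _ _ ((tendsto_log_atTop.comp hinf).const_mul_atTop hδ)
  refine tendsto_atTop_mono' _ ?_ hlog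
  filter_upwards [eventually_ge_atTop T] with t ht
  have hle : P T - δ * log (f T) ≤ P t - δ * log (f t) := hmono self_mem_Ici ht ht
  linarith

lemma powLaw_nonpos_iff {n x : ℝ} : powLaw n x ≤ 0 ↔ x ≤ 0 := by
  refine ⟨fun h => not_lt.1 fun hx => h.not_gt ?_, fun hx => ?_⟩
  · exact mul_pos (Real.rpow_pos_of_pos (abs_pos.2 hx.ne') _) hx
  · exact mul_nonpos_of_nonneg_of_nonpos (Real.rpow_nonneg (abs_nonneg x) _) hx

lemma powLaw_of_nonpos {n x : ℝ} (hn : n ≠ 0) (hx : x ≤ 0) : powLaw n x = -(-x) ^ n := by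
  have hsplit : (-x) ^ n = (-x) ^ (n - 1) * (-x) := by
    simpa using Real.rpow_add' (neg_nonneg.2 hx) (by simpa using hn : n - 1 + 1 ≠ 0)
  rw [powLaw, abs_of_nonpos hx, hsplit]
  ring

lemma continuous_powLaw {n : ℝ} (hn : 1 < n) : Continuous (powLaw n) :=
  (continuous_abs.rpow_const fun _ => Or.inr (by linarith)).mul continuous_id

lemma tendsto_powLaw_zero {n : ℝ} (hn : 1 < n) : Tendsto (powLaw n) (𝓝 0) (𝓝 0) :=
  (continuous_powLaw hn).tendsto' 0 0 (by simp [powLaw])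

namespace PowerLawODE

noncomputable def energy (n α : ℝ) (f : ℝ → ℝ) (t : ℝ) : ℝ :=
  powLaw n (deriv (deriv f) t) + α * (f t * deriv f t)

variable {n α m : ℝ} {f : ℝ → ℝ}

lemma hasDerivAt_energy {t : ℝ} {I : Set ℝ} (hf : SolvesPowerLawODE n α m f I)
    (ht : t ∈ I) : HasDerivAt (energy n α f) ((m + α) * deriv f t ^ 2) t := by
  obtain ⟨hf₁, hf₂, -, hg, hode⟩ := hf
  refine ((hg t ht).hasDerivAt.add
    (((hf₁ t ht).hasDerivAt.mul (hf₂ t ht).hasDerivAt).const_mul α)).congr_deriv ?_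
  linear_combination hode t ht

lemma mul_deriv_eq_energy (hα : α ≠ 0) (t : ℝ) :
    f t * deriv f t = (energy n α f t - powLaw n (deriv (deriv f) t)) / α := by
  rw [energy]; field_simp; ring

theorem exists_energy_pos {T : ℝ} (hn : 1 < n) (hα : 0 < α)
    (hf : ∀ t ∈ Ici T, DifferentiableAt ℝ f t)
    (hf' : ∀ t ∈ Ici T, DifferentiableAt ℝ (deriv f) t)
    (hpos : ∀ t ∈ Ici T, 0 < f t) (hinf : Tendsto f atTop atTop) :
    ∃ t ∈ Ici T, 0 < energy n α f t := by
  by_contra! hE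
  have hconcave : ∀ t ∈ Ici T, 0 ≤ deriv f t → deriv (deriv f) t ≤ 0 := fun t ht h =>
    powLaw_nonpos_iff.1 <| by
      have := hE t ht
      rw [energy] at this
      nlinarith [mul_nonneg hα.le (mul_nonneg (hpos t ht).le h)]
  have hincr : ∀ t ∈ Ici T, 0 < deriv f t := by
    intro t ht
    by_contra! h
    have hdecr := nonpos_of_hasDerivAt_nonpos_of_nonneg
      (fun x hx => (hf' x (Ici_subset_Ici.2 ht hx)).hasDerivAt)
      (fun x hx => hconcave x (Ici_subset_Ici.2 ht hx)) h
    exact (antitoneOn_Ici_of_hasDerivAt_nonpos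
      (fun x hx => (hf x (Ici_subset_Ici.2 ht hx)).hasDerivAt) hdecr).not_tendsto_atTop hinf
  have hmono : MonotoneOn f (Ici T) :=
    monotoneOn_Ici_of_hasDerivAt_nonneg (fun t ht => (hf t ht).hasDerivAt)
      (fun t ht => (hincr t ht).le)
  -- Once `f' > 0`, the inequality `energy ≤ 0` reads `α f(T) f' ≤ α f f' ≤ (-f'')^n`.
  obtain ⟨t, ht, hnonpos⟩ := exists_nonpos_of_mul_le_rpow_neg_deriv (κ := α * f T) hn
    (mul_pos hα (hpos T self_mem_Ici)) (fun t ht => (hf' t ht).hasDerivAt)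
    (fun t ht => hconcave t ht (hincr t ht).le) fun t ht => by
      have := hE t ht
      rw [energy, powLaw_of_nonpos (by linarith) (hconcave t ht (hincr t ht).le)] at this
      nlinarith [mul_le_mul_of_nonneg_right (hmono self_mem_Ici ht ht)
        (mul_pos hα (hincr t ht)).le]
  exact (hincr t ht).not_ge hnonpos

lemma monotoneOn_energy {T : ℝ} (hf : SolvesPowerLawODE n α m f (Ici T)) (hk : 0 ≤ m + α) :
    MonotoneOn (energy n α f) (Ici T) :=
  monotoneOn_Ici_of_hasDerivAt_nonneg (fun _ ht => hasDerivAt_energy hf ht) fun _ _ => by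
    positivity

lemma antitoneOn_energy {T : ℝ} (hf : SolvesPowerLawODE n α m f (Ici T)) (hk : m + α ≤ 0) :
    AntitoneOn (energy n α f) (Ici T) :=
  antitoneOn_Ici_of_hasDerivAt_nonpos (fun _ ht => hasDerivAt_energy hf ht) fun _ _ =>
    mul_nonpos_of_nonpos_of_nonneg hk (sq_nonneg _)

lemma tendsto_mul_deriv_of_tendsto_energy (hn : 1 < n) (hα : 0 < α)
    (hd0' : Tendsto (deriv (deriv f)) atTop (𝓝 0)) {c : ℝ}
    (hE : Tendsto (energy n α f) atTop (𝓝 c)) :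
    Tendsto (fun t => f t * deriv f t) atTop (𝓝 (c / α)) := by
  have := (hE.sub ((tendsto_powLaw_zero hn).comp hd0')).div_const α
  rw [sub_zero] at this
  exact this.congr fun t => (mul_deriv_eq_energy hα.ne' t).symm

theorem tendsto_energy_div_atTop (hn : 1 < n) (hα : 0 < α) (hk : m + α ≠ 0)
    (hf : SolvesPowerLawODE n α m f (Ici 0)) (hpos : ∀ t ∈ Ici (0 : ℝ), 0 < f t)
    (hinf : Tendsto f atTop atTop) (hd0' : Tendsto (deriv (deriv f)) atTop (𝓝 0)) {ε T : ℝ}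
    (hε : 0 < ε) (hE : ∀ t ∈ Ici T, ε ≤ energy n α f t) :
    Tendsto (fun t => energy n α f t / (m + α)) atTop atTop := by
  have hlb : ∀ᶠ t in atTop, ε / (2 * α) ≤ f t * deriv f t ∧ 0 ≤ t := by
    filter_upwards [((tendsto_powLaw_zero hn).comp hd0').eventually (gt_mem_nhds (half_pos hε)),
      eventually_ge_atTop T, eventually_ge_atTop 0] with t hg hT h0
    refine ⟨?_, h0⟩
    rw [mul_deriv_eq_energy (n := n) hα.ne']
    calc ε / (2 * α) = (ε - ε / 2) / α := by field_simp; ring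
      _ ≤ _ := div_le_div_of_nonneg_right
        (by linarith [hE t hT, show powLaw n (deriv (deriv f) t) < ε / 2 from hg]) hα.le
  obtain ⟨T', hT'⟩ := eventually_atTop.1 hlb
  exact tendsto_atTop_of_hasDerivAt_deriv_sq (T := T') (by positivity)
    (fun t ht => hf.1 t (hT' t ht).2)
    (fun t ht => ((hasDerivAt_energy hf (hT' t ht).2).div_const (m + α)).congr_deriv
      (by field_simp))
    (fun t ht => hpos t (hT' t ht).2) (fun t ht => (hT' t ht).1) hinf

theorem tendsto_mul_deriv_atTop_of_pos (hn : 1 < n) (hα : 0 < α) (hk : 0 < m + α)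
    (hf : SolvesPowerLawODE n α m f (Ici 0)) (hpos : ∀ t ∈ Ici (0 : ℝ), 0 < f t)
    (hinf : Tendsto f atTop atTop) (hd0' : Tendsto (deriv (deriv f)) atTop (𝓝 0)) :
    Tendsto (fun t => f t * deriv f t) atTop atTop := by
  obtain ⟨t₀, ht₀, hE₀⟩ := exists_energy_pos hn hα hf.1 hf.2.1 hpos hinf
  have hmono := monotoneOn_energy hf hk.le
  have hE : Tendsto (energy n α f) atTop atTop := by
    have := (tendsto_energy_div_atTop hn hα hk.ne' hf hpos hinf hd0' hE₀
      fun t ht => hmono ht₀ (Ici_subset_Ici.2 ht₀ ht) ht).atTop_mul_const hk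
    simpa only [div_mul_cancel₀ _ hk.ne'] using this
  have := (hE.atTop_add ((tendsto_powLaw_zero hn).comp hd0').neg).atTop_div_const hα
  exact this.congr fun t => by rw [mul_deriv_eq_energy hα.ne', sub_eq_add_neg]; rfl

theorem exists_pos_tendsto_mul_deriv_of_eq_zero (hn : 1 < n) (hα : 0 < α) (hk : m + α = 0)
    (hf : SolvesPowerLawODE n α m f (Ici 0)) (hpos : ∀ t ∈ Ici (0 : ℝ), 0 < f t)
    (hinf : Tendsto f atTop atTop) (hd0' : Tendsto (deriv (deriv f)) atTop (𝓝 0)) :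
    ∃ l, 0 < l ∧ Tendsto (fun t => f t * deriv f t) atTop (𝓝 l) := by
  have hconst : ∀ t ∈ Ici (0 : ℝ), energy n α f t = energy n α f 0 := fun t ht =>
    le_antisymm (antitoneOn_energy hf hk.le self_mem_Ici ht ht)
      (monotoneOn_energy hf hk.ge self_mem_Ici ht ht)
  obtain ⟨t₀, ht₀, hE₀⟩ := exists_energy_pos hn hα hf.1 hf.2.1 hpos hinf
  refine ⟨energy n α f 0 / α, div_pos (hconst t₀ ht₀ ▸ hE₀) hα,
    tendsto_mul_deriv_of_tendsto_energy hn hα hd0' (tendsto_const_nhds.congr' ?_)⟩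
  filter_upwards [eventually_ge_atTop 0] with t ht using (hconst t ht).symm

theorem tendsto_mul_deriv_zero_of_neg (hn : 1 < n) (hα : 0 < α) (hk : m + α < 0)
    (hf : SolvesPowerLawODE n α m f (Ici 0)) (hpos : ∀ t ∈ Ici (0 : ℝ), 0 < f t)
    (hinf : Tendsto f atTop atTop) (hd0' : Tendsto (deriv (deriv f)) atTop (𝓝 0)) :
    Tendsto (fun t => f t * deriv f t) atTop (𝓝 0) := by
  have hanti := antitoneOn_energy hf hk.le
  have hE_pos : ∀ t ∈ Ici (0 : ℝ), 0 < energy n α f t := fun t ht => by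
    obtain ⟨s, hs, hEs⟩ := exists_energy_pos hn hα
      (fun x hx => hf.1 x (Ici_subset_Ici.2 ht hx))
      (fun x hx => hf.2.1 x (Ici_subset_Ici.2 ht hx))
      (fun x hx => hpos x (Ici_subset_Ici.2 ht hx)) hinf
    exact hEs.trans_le (hanti ht (Ici_subset_Ici.2 ht hs) hs)
  have hE : Tendsto (energy n α f) atTop (𝓝 0) := by
    refine tendsto_order.2 ⟨fun a ha => ?_, fun ε hε => ?_⟩
    · filter_upwards [eventually_ge_atTop 0] with t ht using ha.trans (hE_pos t ht)
    · -- Otherwise `energy / (m + α)`, a negative function, would tend to `+∞`.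
      obtain ⟨t₁, ht₁, hlt⟩ : ∃ t₁ ∈ Ici (0 : ℝ), energy n α f t₁ < ε := by
        by_contra! hge
        obtain ⟨t, hgt, ht⟩ := ((tendsto_energy_div_atTop hn hα hk.ne hf hpos hinf hd0' hε
          hge).eventually_gt_atTop 0 |>.and (eventually_ge_atTop 0)).exists
        exact (div_neg_of_pos_of_neg (hE_pos t ht) hk).not_gt hgt
      filter_upwards [eventually_ge_atTop t₁] with t ht using
        (hanti ht₁ (Ici_subset_Ici.2 ht₁ ht) ht).trans_lt hlt
  simpa using tendsto_mul_deriv_of_tendsto_energy hn hα hd0' hE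

end PowerLawODE

theorem stmt_15_general (n α m : ℝ) (hn : 1 < n) (hα : 0 < α)
    (f : ℝ → ℝ)
    (hf : SolvesPowerLawODE n α m f (Set.Ici 0))
    (hpos : ∀ t : ℝ, 0 ≤ t → 0 < f t)
    (hinf : Filter.Tendsto f Filter.atTop Filter.atTop)
    (hd0' : Filter.Tendsto (deriv (deriv f)) Filter.atTop (nhds 0)) :
    ∃ L : EReal, 0 ≤ L ∧
      Filter.Tendsto (fun t => ((f t * deriv f t : ℝ) : EReal)) Filter.atTop (nhds L) ∧
      (0 < m + α → L = ⊤) ∧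
      (m + α = 0 → ∃ l : ℝ, 0 < l ∧ L = (l : EReal)) ∧
      (m + α < 0 → L = 0) := by
  rcases lt_trichotomy (m + α) 0 with hk | hk | hk
  · refine ⟨0, le_rfl, ?_, fun h => absurd h hk.not_gt, fun h => absurd h hk.ne, fun _ => rfl⟩
    exact EReal.tendsto_coe.2
      (PowerLawODE.tendsto_mul_deriv_zero_of_neg hn hα hk hf hpos hinf hd0')
  · obtain ⟨l, hl, hlim⟩ :=
      PowerLawODE.exists_pos_tendsto_mul_deriv_of_eq_zero hn hα hk hf hpos hinf hd0'
    refine ⟨l, EReal.coe_nonneg.2 hl.le, EReal.tendsto_coe.2 hlim, fun h => absurd hk h.ne',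
      fun _ => ⟨l, hl, rfl⟩, fun h => absurd hk h.ne⟩
  · refine ⟨⊤, le_top, ?_, fun _ => rfl, fun h => absurd h hk.ne', fun h => absurd h hk.not_gt⟩
    exact EReal.tendsto_coe_nhds_top_iff.2
      (PowerLawODE.tendsto_mul_deriv_atTop_of_pos hn hα hk hf hpos hinf hd0')

theorem stmt_15 (n α m : ℝ) (hn : 1 < n) (hα : 0 < α) (hm₁ : -2 * α < m) (hm₂ : m < 0)
    (f : ℝ → ℝ)
    (hf : SolvesPowerLawODE n α m f (Set.Ici 0))
    (hpos : ∀ t : ℝ, 0 ≤ t → 0 < f t)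
    (hinf : Filter.Tendsto f Filter.atTop Filter.atTop)
    (hd0 : Filter.Tendsto (deriv f) Filter.atTop (nhds 0))
    (hd0' : Filter.Tendsto (deriv (deriv f)) Filter.atTop (nhds 0)) :
    ∃ L : EReal, 0 ≤ L ∧
      Filter.Tendsto (fun t => ((f t * deriv f t : ℝ) : EReal)) Filter.atTop (nhds L) ∧
      (0 < m + α → L = ⊤) ∧
      (m + α = 0 → ∃ l : ℝ, 0 < l ∧ L = (l : EReal)) ∧
      (m + α < 0 → L = 0) :=
  stmt_15_general n α m hn hα f hf hpos hinf hd0'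
end
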